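/- Consider the battery SoC dynamics B_{t+1} = B_t + η_c·pc_t·Δt - (pd_t/η_d)·Δt with 0 < η_c < 1, 0 < η_d < 1, Δt > 0. Given two feasible charge/discharge schedules (pd, pc) and (pd', pc') with the same net injection pd_t - pc_t = pd'_t - pc'_t for all t and the same initial SoC, the difference in terminal SoC equals Δt·(1/η_d - η_c)·Σ_t (pd'_t - pd_t). In particular, if pd'_t ≥ pd_t for all t with strict inequality for some t, the schedule (pd', pc') ends with strictly lower state of charge. -/
import Mathlib


open Finset in
/-- Fictitious energy losses of SCD: two feasible schedules with the same net
injection differ in terminal SoC by Δt·(1/η_d - η_c)·Σ (pd' - pd); extra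
discharge strictly lowers the state of charge. -/
theorem scd_fictitious_losses
    (T : ℕ) (Δt ηc ηd : ℝ)
    (hηc0 : 0 < ηc) (hηc1 : ηc < 1) (hηd0 : 0 < ηd) (hηd1 : ηd < 1) (hΔt : 0 < Δt)
    (pd pc pd' pc' : ℕ → ℝ) (B B' : ℕ → ℝ)
    (hfeas : ∀ t, 0 ≤ pd t ∧ 0 ≤ pc t) (hfeas' : ∀ t, 0 ≤ pd' t ∧ 0 ≤ pc' t)
    (hdyn : ∀ t, B (t + 1) = B t + ηc * pc t * Δt - pd t / ηd * Δt)
    (hdyn' : ∀ t, B' (t + 1) = B' t + ηc * pc' t * Δt - pd' t / ηd * Δt)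
    (hnet : ∀ t, pd t - pc t = pd' t - pc' t)
    (h0 : B 0 = B' 0) :
    B T - B' T = Δt * (1 / ηd - ηc) * ∑ t ∈ range T, (pd' t - pd t) ∧
    ((∀ t ∈ range T, pd t ≤ pd' t) → (∃ t ∈ range T, pd t < pd' t) → B' T < B T) := by
  have key : ∀ n, B n - B' n = Δt * (1 / ηd - ηc) * ∑ t ∈ range n, (pd' t - pd t) := by
    intro n
    induction n with
    | zero => simp [h0]
    | succ n ih =>
      have hpc : pc' n = pc n + (pd' n - pd n) := by have := hnet n; linarith
      rw [hdyn n, hdyn' n, Finset.sum_range_succ, hpc]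
      linear_combination ih
  refine ⟨key T, fun hle ⟨t0, ht0, hlt⟩ => ?_⟩
  have hsum : 0 < ∑ t ∈ range T, (pd' t - pd t) := by
    apply Finset.sum_pos' (fun i hi => by linarith [hle i hi])
    exact ⟨t0, ht0, by linarith⟩
  have hcoef : 0 < 1 / ηd - ηc := by
    have : 1 < 1 / ηd := (one_lt_div hηd0).mpr hηd1
    linarith
  have hpos := mul_pos (mul_pos hΔt hcoef) hsum
  linarith [key T]
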